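/- Let ℰ be a non-abelian extension of 𝒜 by ℬ and W: Aut(𝒜) × Aut(ℬ) → ℋ²_nab(𝒜,ℬ) the Wells map W(α,β) = [Θ_{(α,β)} − Θ], where Θ is the 2-cocycle induced by a section. Then there is an exact sequence of groups and pointed sets: 1 → Aut^𝒜_ℬ(ℰ) → Aut_ℬ(ℰ) →^K Aut(𝒜) × Aut(ℬ) →^W ℋ²_nab(𝒜,ℬ), where Aut^𝒜_ℬ(ℰ) = Ker K; in particular Ker W = Im K. -/
import Mathlib


universe u

section
variable (K : Type u) [Field K]

/-- A relative Rota-Baxter Lie algebra: a Lie algebra `A`, a representation `rep` of `A`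
on `V`, and a relative Rota-Baxter operator `T : V → A`. -/
structure RelRB (A V : Type u) [AddCommGroup A] [Module K A]
    [AddCommGroup V] [Module K V] : Type u where
  br : A →ₗ[K] A →ₗ[K] A
  skew : ∀ x y, br x y + br y x = 0
  jacobi : ∀ x y z, br x (br y z) = br (br x y) z + br y (br x z)
  rep : A →ₗ[K] Module.End K V
  rep_br : ∀ x y, rep (br x y) = rep x * rep y - rep y * rep x
  T : V →ₗ[K] A
  rb : ∀ u v, br (T u) (T v) = T (rep (T u) v - rep (T v) u)

variable {A V B M : Type u}
  [AddCommGroup A] [Module K A] [AddCommGroup V] [Module K V]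
  [AddCommGroup B] [Module K B] [AddCommGroup M] [Module K M]

/-- A non-abelian 2-cocycle on `𝒜` with values in `ℬ`: identities (L1)-(L9). -/
def IsNACocycle (𝒜 : RelRB K A V) (ℬ : RelRB K B M)
    (ω : A → A → B) (ϖ : A → V → M) (χ : V → B)
    (μ : V → B → M) (ρB : A → B → B) (ρM : A → M → M) : Prop :=
  (∀ x y, ω x y + ω y x = 0) ∧
  (∀ x y a, ρB x (ρB y a) - ρB y (ρB x a) - ρB (𝒜.br x y) a = ℬ.br (ω x y) a) ∧
  (∀ x y z, ρB x (ω y z) + ρB y (ω z x) + ρB z (ω x y)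
      = ω (𝒜.br x y) z + ω (𝒜.br y z) x + ω (𝒜.br z x) y) ∧
  (∀ x y v, ϖ x (𝒜.rep y v) - ϖ y (𝒜.rep x v) - ϖ (𝒜.br x y) v
      = ρM y (ϖ x v) - ρM x (ϖ y v) - μ v (ω x y)) ∧
  (∀ x y m, ρM x (ρM y m) - ρM y (ρM x m) = ρM (𝒜.br x y) m + ℬ.rep (ω x y) m) ∧
  (∀ x v a, ρM x (μ v a) - μ (𝒜.rep x v) a + ℬ.rep a (ϖ x v) = μ v (ρB x a)) ∧
  (∀ x a m, ρM x (ℬ.rep a m) - ℬ.rep a (ρM x m) = ℬ.rep (ρB x a) m) ∧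
  (∀ v m, ρB (𝒜.T v) (ℬ.T m) + ℬ.br (χ v) (ℬ.T m)
      = ℬ.T (ρM (𝒜.T v) m + ℬ.rep (χ v) m + μ v (ℬ.T m))) ∧
  (∀ v₁ v₂, ρB (𝒜.T v₁) (χ v₂) - ρB (𝒜.T v₂) (χ v₁) + ℬ.br (χ v₁) (χ v₂)
        + ω (𝒜.T v₁) (𝒜.T v₂)
      = ℬ.T (ϖ (𝒜.T v₁) v₂ - ϖ (𝒜.T v₂) v₁)
        + χ (𝒜.rep (𝒜.T v₁) v₂ - 𝒜.rep (𝒜.T v₂) v₁)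
        + ℬ.T (μ v₁ (χ v₂) - μ v₂ (χ v₁)))
/-- Equivalence of non-abelian 2-cocycles via linear maps `ζ : A → B`, `η : V → M`:
equations (E1)-(E6). -/
def CocycleEquiv (𝒜 : RelRB K A V) (ℬ : RelRB K B M)
    (ω : A → A → B) (ϖ : A → V → M) (χ : V → B)
    (μ : V → B → M) (ρB : A → B → B) (ρM : A → M → M)
    (ω' : A → A → B) (ϖ' : A → V → M) (χ' : V → B)
    (μ' : V → B → M) (ρB' : A → B → B) (ρM' : A → M → M)
    (ζ : A → B) (η : V → M) : Prop :=
  (∀ x y, ω x y - ω' x y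
      = ρB' x (ζ y) - ρB' y (ζ x) - ζ (𝒜.br x y) + ℬ.br (ζ x) (ζ y)) ∧
  (∀ x a, ρB x a - ρB' x a = ℬ.br (ζ x) a) ∧
  (∀ x m, ρM x m - ρM' x m = ℬ.rep (ζ x) m) ∧
  (∀ v a, μ v a - μ' v a = - ℬ.rep a (η v)) ∧
  (∀ v, χ v - χ' v = ℬ.T (η v) - ζ (𝒜.T v)) ∧
  (∀ x v, ϖ x v - ϖ' x v
      = ρM' x (η v) + ℬ.rep (ζ x) (η v) - μ' v (ζ x) - η (𝒜.rep x v))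
/-- A non-abelian extension of `𝒜` by `ℬ`: a relative Rota-Baxter Lie algebra `ℰ`
together with a short exact sequence `0 → ℬ → ℰ → 𝒜 → 0` of relative Rota-Baxter Lie
algebras. -/
structure ExtData {Ah Vh : Type u} [AddCommGroup Ah] [Module K Ah]
    [AddCommGroup Vh] [Module K Vh]
    (𝒜 : RelRB K A V) (ℬ : RelRB K B M) (ℰ : RelRB K Ah Vh) : Type u where
  iB : B →ₗ[K] Ah
  iM : M →ₗ[K] Vh
  pA : Ah →ₗ[K] A
  pV : Vh →ₗ[K] V
  iB_br : ∀ a b, iB (ℬ.br a b) = ℰ.br (iB a) (iB b)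
  iB_T : ∀ m, iB (ℬ.T m) = ℰ.T (iM m)
  i_rep : ∀ a m, iM (ℬ.rep a m) = ℰ.rep (iB a) (iM m)
  pA_br : ∀ x y, pA (ℰ.br x y) = 𝒜.br (pA x) (pA y)
  p_T : ∀ vh, pA (ℰ.T vh) = 𝒜.T (pV vh)
  p_rep : ∀ x vh, pV (ℰ.rep x vh) = 𝒜.rep (pA x) (pV vh)
  iB_inj : Function.Injective iB
  iM_inj : Function.Injective iM
  pA_surj : Function.Surjective pA
  pV_surj : Function.Surjective pV
  exactA : ∀ x, pA x = 0 ↔ x ∈ Set.range iB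
  exactV : ∀ v, pV v = 0 ↔ v ∈ Set.range iM
/-- The non-abelian 2-cocycle induced by a section `(sA, sV)` of a non-abelian extension:
`iB (ω x y) = [sA x, sA y] - sA [x,y]`, `iM (ϖ x v) = ρ̂(sA x)(sV v) - sV (ρ(x)v)`,
`iB (χ v) = T̂(sV v) - sA (T v)`, `iM (μ v a) = -ρ̂(iB a)(sV v)`,
`iB (ρB x a) = [sA x, iB a]`, `iM (ρM x m) = ρ̂(sA x)(iM m)`. -/
def InducedCocycle {Ah Vh : Type u} [AddCommGroup Ah] [Module K Ah]
    [AddCommGroup Vh] [Module K Vh]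
    {𝒜 : RelRB K A V} {ℬ : RelRB K B M} {ℰ : RelRB K Ah Vh}
    (E : ExtData K 𝒜 ℬ ℰ) (sA : A →ₗ[K] Ah) (sV : V →ₗ[K] Vh)
    (ω : A → A → B) (ϖ : A → V → M) (χ : V → B)
    (μ : V → B → M) (ρB : A → B → B) (ρM : A → M → M) : Prop :=
  (∀ x y, E.iB (ω x y) = ℰ.br (sA x) (sA y) - sA (𝒜.br x y)) ∧
  (∀ x v, E.iM (ϖ x v) = ℰ.rep (sA x) (sV v) - sV (𝒜.rep x v)) ∧
  (∀ v, E.iB (χ v) = ℰ.T (sV v) - sA (𝒜.T v)) ∧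
  (∀ v a, E.iM (μ v a) = - ℰ.rep (E.iB a) (sV v)) ∧
  (∀ x a, E.iB (ρB x a) = ℰ.br (sA x) (E.iB a)) ∧
  (∀ x m, E.iM (ρM x m) = ℰ.rep (sA x) (E.iM m))
/-- Automorphism conditions for a pair of plain maps. -/
def IsAutFun (𝒜 : RelRB K A V) (f : A → A) (g : V → V) : Prop :=
  Function.Bijective f ∧ Function.Bijective g ∧
  (∀ x y, f (𝒜.br x y) = 𝒜.br (f x) (f y)) ∧
  (∀ v, f (𝒜.T v) = 𝒜.T (g v)) ∧
  (∀ x v, g (𝒜.rep x v) = 𝒜.rep (f x) (g v))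
/-- Inducibility of a pair `(α, β)` of automorphisms with respect to a non-abelian
extension: there is an automorphism `γ` of `ℰ` restricting to `β` on `ℬ` and projecting
to `α` on `𝒜`. -/
def Inducible {Ah Vh : Type u} [AddCommGroup Ah] [Module K Ah]
    [AddCommGroup Vh] [Module K Vh]
    {𝒜 : RelRB K A V} {ℬ : RelRB K B M} {ℰ : RelRB K Ah Vh}
    (E : ExtData K 𝒜 ℬ ℰ) (sA : A →ₗ[K] Ah) (sV : V →ₗ[K] Vh)
    (α₁ : A → A) (α₂ : V → V) (β₁ : B → B) (β₂ : M → M) : Prop :=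
  ∃ (γ₁ : Ah ≃ₗ[K] Ah) (γ₂ : Vh ≃ₗ[K] Vh),
    (∀ x y, γ₁ (ℰ.br x y) = ℰ.br (γ₁ x) (γ₁ y)) ∧
    (∀ v, γ₁ (ℰ.T v) = ℰ.T (γ₂ v)) ∧
    (∀ x v, γ₂ (ℰ.rep x v) = ℰ.rep (γ₁ x) (γ₂ v)) ∧
    (∀ a, γ₁ (E.iB a) = E.iB (β₁ a)) ∧
    (∀ m, γ₂ (E.iM m) = E.iM (β₂ m)) ∧
    (∀ x, E.pA (γ₁ (sA x)) = α₁ x) ∧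
    (∀ v, E.pV (γ₂ (sV v)) = α₂ v)
/-- The data of a non-abelian 2-cocycle. -/
structure CocData (A V B M : Type u) : Type u where
  ω : A → A → B
  ϖ : A → V → M
  χ : V → B
  μ : V → B → M
  ρB : A → B → B
  ρM : A → M → M

/-- Equivalence (cohomology) relation on non-abelian 2-cocycles; the non-abelian second
cohomology group is the quotient `Quot (CocRel K 𝒜 ℬ)`. -/
def CocRel (𝒜 : RelRB K A V) (ℬ : RelRB K B M)
    (c c' : {c : CocData A V B M // IsNACocycle K 𝒜 ℬ c.ω c.ϖ c.χ c.μ c.ρB c.ρM}) :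
    Prop :=
  ∃ (ζ : A →ₗ[K] B) (η : V →ₗ[K] M),
    CocycleEquiv K 𝒜 ℬ c.1.ω c.1.ϖ c.1.χ c.1.μ c.1.ρB c.1.ρM
      c'.1.ω c'.1.ϖ c'.1.χ c'.1.μ c'.1.ρB c'.1.ρM (fun x => ζ x) (fun v => η v)
theorem lift_exists {B' Ah' A' : Type u} [AddCommGroup B'] [Module K B']
    [AddCommGroup Ah'] [Module K Ah'] [AddCommGroup A'] [Module K A']
    (i : B' →ₗ[K] Ah') (hinj : Function.Injective i) (F : A' →ₗ[K] Ah')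
    (h : ∀ x, F x ∈ Set.range i) :
    ∃ ζ : A' →ₗ[K] B', ∀ x, i (ζ x) = F x := by
  have h' : ∀ x, F x ∈ LinearMap.range i := fun x => by
    obtain ⟨b, hb⟩ := h x; exact ⟨b, hb⟩
  refine ⟨(LinearEquiv.ofInjective i hinj).symm.toLinearMap ∘ₗ
    F.codRestrict (LinearMap.range i) h', fun x => ?_⟩
  have h2 := (LinearEquiv.ofInjective i hinj).apply_symm_apply
    (F.codRestrict (LinearMap.range i) h' x)
  have h3 := congrArg (Subtype.val) h2
  rw [LinearEquiv.ofInjective_apply] at h3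
  simpa using h3

theorem invert {Ah Vh : Type u}
    [AddCommGroup Ah] [Module K Ah] [AddCommGroup Vh] [Module K Vh]
    (𝒜 : RelRB K A V) (ℬ : RelRB K B M) (ℰ : RelRB K Ah Vh)
    (E : ExtData K 𝒜 ℬ ℰ)
    (sA : A →ₗ[K] Ah) (sV : V →ₗ[K] Vh)
    (hsA : ∀ x, E.pA (sA x) = x) (hsV : ∀ v, E.pV (sV v) = v)
    (c : CocData A V B M)
    (hcoc : InducedCocycle K E sA sV c.ω c.ϖ c.χ c.μ c.ρB c.ρM)
    (α₁ : A ≃ₗ[K] A) (α₂ : V ≃ₗ[K] V)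
    (hα : IsAutFun K 𝒜 (fun x => α₁ x) (fun v => α₂ v))
    (β₁ : B ≃ₗ[K] B) (β₂ : M ≃ₗ[K] M)
    (hind : Inducible K E sA sV (fun x => α₁ x) (fun v => α₂ v)
      (fun a => β₁ a) (fun m => β₂ m)) :
    ∃ (ζ : A →ₗ[K] B) (η : V →ₗ[K] M),
      CocycleEquiv K 𝒜 ℬ
        (fun x y => β₁ (c.ω (α₁.symm x) (α₁.symm y)))
        (fun x v => β₂ (c.ϖ (α₁.symm x) (α₂.symm v)))
        (fun v => β₁ (c.χ (α₂.symm v)))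
        (fun v a => β₂ (c.μ (α₂.symm v) (β₁.symm a)))
        (fun x a => β₁ (c.ρB (α₁.symm x) (β₁.symm a)))
        (fun x m => β₂ (c.ρM (α₁.symm x) (β₂.symm m)))
        c.ω c.ϖ c.χ c.μ c.ρB c.ρM (fun x => ζ x) (fun v => η v) := by
  obtain ⟨hI1, hI2, hI3, hI4, hI5, hI6⟩ := hcoc
  obtain ⟨γ₁, γ₂, hγbr, hγT, hγrep, hγiB, hγiM, hγpA, hγpV⟩ := hind
  obtain ⟨-, -, hαbr, hαT, hαrep⟩ := hα
  beta_reduce at hγiB hγiM hγpA hγpV hαbr hαT hαrep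
  -- derived α-identities
  have hαbr2 : ∀ x y, 𝒜.br (α₁.symm x) (α₁.symm y) = α₁.symm (𝒜.br x y) := by
    intro x y
    apply α₁.injective
    rw [hαbr, LinearEquiv.apply_symm_apply, LinearEquiv.apply_symm_apply,
      LinearEquiv.apply_symm_apply]
  have hαT2 : ∀ v, 𝒜.T (α₂.symm v) = α₁.symm (𝒜.T v) := by
    intro v
    apply α₁.injective
    rw [hαT, LinearEquiv.apply_symm_apply, LinearEquiv.apply_symm_apply]
  have hαrep2 : ∀ x v, 𝒜.rep (α₁.symm x) (α₂.symm v) = α₂.symm (𝒜.rep x v) := by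
    intro x v
    apply α₂.injective
    rw [hαrep, LinearEquiv.apply_symm_apply, LinearEquiv.apply_symm_apply,
      LinearEquiv.apply_symm_apply]
  -- construct ζ and η
  have hrgζ : ∀ x, (γ₁.toLinearMap ∘ₗ sA ∘ₗ α₁.symm.toLinearMap - sA) x ∈ Set.range E.iB := by
    intro x
    rw [← E.exactA]
    simp [hsA, hγpA]
  obtain ⟨ζ, hζ⟩ := lift_exists K E.iB E.iB_inj _ hrgζ
  have hζ' : ∀ x, γ₁ (sA (α₁.symm x)) = sA x + E.iB (ζ x) := by
    intro x
    have h := hζ x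
    simp only [LinearMap.sub_apply, LinearMap.comp_apply, LinearEquiv.coe_coe] at h
    rw [h]; abel
  have hrgη : ∀ v, (γ₂.toLinearMap ∘ₗ sV ∘ₗ α₂.symm.toLinearMap - sV) v ∈ Set.range E.iM := by
    intro v
    rw [← E.exactV]
    simp [hsV, hγpV]
  obtain ⟨η, hη⟩ := lift_exists K E.iM E.iM_inj _ hrgη
  have hη' : ∀ v, γ₂ (sV (α₂.symm v)) = sV v + E.iM (η v) := by
    intro v
    have h := hη v
    simp only [LinearMap.sub_apply, LinearMap.comp_apply, LinearEquiv.coe_coe] at h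
    rw [h]; abel
  refine ⟨ζ, η, ?_, ?_, ?_, ?_, ?_, ?_⟩
  · -- (E1) ω
    intro x y
    beta_reduce
    apply E.iB_inj
    have k1 : E.iB (β₁ (c.ω (α₁.symm x) (α₁.symm y)))
        = ℰ.br (sA x + E.iB (ζ x)) (sA y + E.iB (ζ y))
          - (sA (𝒜.br x y) + E.iB (ζ (𝒜.br x y))) := by
      rw [← hγiB, hI1, map_sub, hγbr, hζ', hζ', hαbr2, hζ']
    simp only [map_sub, map_add]
    rw [k1, hI1, hI5, hI5, E.iB_br]
    simp only [map_add, LinearMap.add_apply]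
    rw [show ℰ.br (E.iB (ζ x)) (sA y) = -ℰ.br (sA y) (E.iB (ζ x)) from
      eq_neg_of_add_eq_zero_left (ℰ.skew _ _)]
    abel
  · -- (E2) ρB
    intro x a
    beta_reduce
    apply E.iB_inj
    have k1 : E.iB (β₁ (c.ρB (α₁.symm x) (β₁.symm a)))
        = ℰ.br (sA x + E.iB (ζ x)) (E.iB a) := by
      rw [← hγiB, hI5, hγbr, hζ', hγiB, LinearEquiv.apply_symm_apply]
    simp only [map_sub]
    rw [k1, hI5, E.iB_br]
    simp only [map_add, LinearMap.add_apply]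
    abel
  · -- (E3) ρM
    intro x m
    beta_reduce
    apply E.iM_inj
    have k1 : E.iM (β₂ (c.ρM (α₁.symm x) (β₂.symm m)))
        = ℰ.rep (sA x + E.iB (ζ x)) (E.iM m) := by
      rw [← hγiM, hI6, hγrep, hζ', hγiM, LinearEquiv.apply_symm_apply]
    simp only [map_sub]
    rw [k1, hI6, E.i_rep]
    simp only [map_add, LinearMap.add_apply]
    abel
  · -- (E4) μ
    intro v a
    beta_reduce
    apply E.iM_inj
    have k1 : E.iM (β₂ (c.μ (α₂.symm v) (β₁.symm a)))
        = -ℰ.rep (E.iB a) (sV v + E.iM (η v)) := by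
      rw [← hγiM, hI4, map_neg, hγrep, hγiB, LinearEquiv.apply_symm_apply, hη']
    simp only [map_sub, map_neg]
    rw [k1, hI4, E.i_rep]
    simp only [map_add]
    abel
  · -- (E5) χ
    intro v
    beta_reduce
    apply E.iB_inj
    have k1 : E.iB (β₁ (c.χ (α₂.symm v)))
        = ℰ.T (sV v + E.iM (η v)) - (sA (𝒜.T v) + E.iB (ζ (𝒜.T v))) := by
      rw [← hγiB, hI3, map_sub, hγT, hη', hαT2, hζ']
    simp only [map_sub]
    rw [k1, hI3, E.iB_T]
    simp only [map_add]
    abel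
  · -- (E6) ϖ
    intro x v
    beta_reduce
    apply E.iM_inj
    have k1 : E.iM (β₂ (c.ϖ (α₁.symm x) (α₂.symm v)))
        = ℰ.rep (sA x + E.iB (ζ x)) (sV v + E.iM (η v))
          - (sV (𝒜.rep x v) + E.iM (η (𝒜.rep x v))) := by
      rw [← hγiM, hI2, map_sub, hγrep, hζ', hη', hαrep2, hη']
    simp only [map_sub, map_add]
    rw [k1, hI2, hI6, E.i_rep,
      show E.iM (c.μ v (ζ x)) = -ℰ.rep (E.iB (ζ x)) (sV v) from hI4 v (ζ x)]
    simp only [map_add, LinearMap.add_apply]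
    abel

theorem sub_solve {G : Type u} [AddCommGroup G] {a b c : G} (h : a - b = c) :
    b = a - c := by rw [← h]; abel

theorem cocrel_step (𝒜 : RelRB K A V) (ℬ : RelRB K B M)
    (e : {c : CocData A V B M // IsNACocycle K 𝒜 ℬ c.ω c.ϖ c.χ c.μ c.ρB c.ρM})
    (hρBa : ∀ x u w, e.1.ρB x (u + w) = e.1.ρB x u + e.1.ρB x w)
    (hρBs : ∀ x u w, e.1.ρB x (u - w) = e.1.ρB x u - e.1.ρB x w)
    (hρMa : ∀ x u w, e.1.ρM x (u + w) = e.1.ρM x u + e.1.ρM x w)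
    (hρMs : ∀ x u w, e.1.ρM x (u - w) = e.1.ρM x u - e.1.ρM x w)
    (hμa : ∀ v u w, e.1.μ v (u + w) = e.1.μ v u + e.1.μ v w)
    (hμs : ∀ v u w, e.1.μ v (u - w) = e.1.μ v u - e.1.μ v w)
    (d d' : {c : CocData A V B M // IsNACocycle K 𝒜 ℬ c.ω c.ϖ c.χ c.μ c.ρB c.ρM})
    (h : CocRel K 𝒜 ℬ d d') :
    CocRel K 𝒜 ℬ d e ↔ CocRel K 𝒜 ℬ d' e := by
  obtain ⟨ζ₀, η₀, hF1, hF2, hF3, hF4, hF5, hF6⟩ := h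
  beta_reduce at hF1 hF2 hF3 hF4 hF5 hF6
  constructor
  · rintro ⟨ζ, η, hG1, hG2, hG3, hG4, hG5, hG6⟩
    beta_reduce at hG1 hG2 hG3 hG4 hG5 hG6
    have hdρB : ∀ x a, d'.1.ρB x a = d.1.ρB x a - ℬ.br (ζ₀ x) a :=
      fun x a => sub_solve (hF2 x a)
    have hdρM : ∀ x m, d'.1.ρM x m = d.1.ρM x m - ℬ.rep (ζ₀ x) m :=
      fun x m => sub_solve (hF3 x m)
    have hdμ : ∀ v a, d'.1.μ v a = d.1.μ v a - -ℬ.rep a (η₀ v) :=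
      fun v a => sub_solve (hF4 v a)
    refine ⟨ζ - ζ₀, η - η₀, ?_, ?_, ?_, ?_, ?_, ?_⟩
    · intro x y
      beta_reduce
      simp only [LinearMap.sub_apply, map_sub]
      rw [hρBs, hρBs, sub_solve (hF1 x y), hdρB x (ζ₀ y), hdρB y (ζ₀ x),
        eq_add_of_sub_eq (hG2 x (ζ₀ y)), eq_add_of_sub_eq (hG2 y (ζ₀ x)),
        eq_add_of_sub_eq (hG1 x y),
        show ℬ.br (ζ y) (ζ₀ x) = -ℬ.br (ζ₀ x) (ζ y) from
          eq_neg_of_add_eq_zero_left (ℬ.skew _ _),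
        show ℬ.br (ζ₀ y) (ζ₀ x) = -ℬ.br (ζ₀ x) (ζ₀ y) from
          eq_neg_of_add_eq_zero_left (ℬ.skew _ _)]
      abel
    · intro x a
      beta_reduce
      simp only [LinearMap.sub_apply, map_sub]
      rw [hdρB x a, eq_add_of_sub_eq (hG2 x a)]
      abel
    · intro x m
      beta_reduce
      simp only [LinearMap.sub_apply, map_sub]
      rw [hdρM x m, eq_add_of_sub_eq (hG3 x m)]
      abel
    · intro v a
      beta_reduce
      simp only [LinearMap.sub_apply, map_sub]
      rw [hdμ v a, eq_add_of_sub_eq (hG4 v a)]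
      abel
    · intro v
      beta_reduce
      simp only [LinearMap.sub_apply, map_sub]
      rw [sub_solve (hF5 v), eq_add_of_sub_eq (hG5 v)]
      abel
    · intro x v
      beta_reduce
      simp only [LinearMap.sub_apply, map_sub]
      rw [hρMs, hμs, sub_solve (hF6 x v), hdρM x (η₀ v), hdμ v (ζ₀ x),
        eq_add_of_sub_eq (hG3 x (η₀ v)), eq_add_of_sub_eq (hG4 v (ζ₀ x)),
        eq_add_of_sub_eq (hG6 x v)]
      abel
  · rintro ⟨ζ, η, hG1, hG2, hG3, hG4, hG5, hG6⟩
    beta_reduce at hG1 hG2 hG3 hG4 hG5 hG6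
    refine ⟨ζ₀ + ζ, η₀ + η, ?_, ?_, ?_, ?_, ?_, ?_⟩
    · intro x y
      beta_reduce
      simp only [LinearMap.add_apply, map_add]
      rw [hρBa, hρBa, eq_add_of_sub_eq (hF1 x y), eq_add_of_sub_eq (hG1 x y),
        eq_add_of_sub_eq (hG2 x (ζ₀ y)), eq_add_of_sub_eq (hG2 y (ζ₀ x)),
        show ℬ.br (ζ y) (ζ₀ x) = -ℬ.br (ζ₀ x) (ζ y) from
          eq_neg_of_add_eq_zero_left (ℬ.skew _ _)]
      abel
    · intro x a
      beta_reduce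
      simp only [LinearMap.add_apply, map_add]
      rw [eq_add_of_sub_eq (hF2 x a), eq_add_of_sub_eq (hG2 x a)]
      abel
    · intro x m
      beta_reduce
      simp only [LinearMap.add_apply, map_add]
      rw [eq_add_of_sub_eq (hF3 x m), eq_add_of_sub_eq (hG3 x m)]
      abel
    · intro v a
      beta_reduce
      simp only [LinearMap.add_apply, map_add]
      rw [eq_add_of_sub_eq (hF4 v a), eq_add_of_sub_eq (hG4 v a)]
      abel
    · intro v
      beta_reduce
      simp only [LinearMap.add_apply, map_add]
      rw [eq_add_of_sub_eq (hF5 v), eq_add_of_sub_eq (hG5 v)]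
      abel
    · intro x v
      beta_reduce
      simp only [LinearMap.add_apply, map_add]
      rw [hρMa, hμa, eq_add_of_sub_eq (hF6 x v), eq_add_of_sub_eq (hG6 x v),
        eq_add_of_sub_eq (hG3 x (η₀ v)), eq_add_of_sub_eq (hG4 v (ζ₀ x))]
      abel

theorem construct {Ah Vh : Type u}
    [AddCommGroup Ah] [Module K Ah] [AddCommGroup Vh] [Module K Vh]
    (𝒜 : RelRB K A V) (ℬ : RelRB K B M) (ℰ : RelRB K Ah Vh)
    (E : ExtData K 𝒜 ℬ ℰ)
    (sA : A →ₗ[K] Ah) (sV : V →ₗ[K] Vh)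
    (hsA : ∀ x, E.pA (sA x) = x) (hsV : ∀ v, E.pV (sV v) = v)
    (c : CocData A V B M)
    (hcoc : InducedCocycle K E sA sV c.ω c.ϖ c.χ c.μ c.ρB c.ρM)
    (α₁ : A ≃ₗ[K] A) (α₂ : V ≃ₗ[K] V)
    (hα : IsAutFun K 𝒜 (fun x => α₁ x) (fun v => α₂ v))
    (β₁ : B ≃ₗ[K] B) (β₂ : M ≃ₗ[K] M)
    (hβ : IsAutFun K ℬ (fun a => β₁ a) (fun m => β₂ m))
    (ζ : A →ₗ[K] B) (η : V →ₗ[K] M)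
    (heq : CocycleEquiv K 𝒜 ℬ
        (fun x y => β₁ (c.ω (α₁.symm x) (α₁.symm y)))
        (fun x v => β₂ (c.ϖ (α₁.symm x) (α₂.symm v)))
        (fun v => β₁ (c.χ (α₂.symm v)))
        (fun v a => β₂ (c.μ (α₂.symm v) (β₁.symm a)))
        (fun x a => β₁ (c.ρB (α₁.symm x) (β₁.symm a)))
        (fun x m => β₂ (c.ρM (α₁.symm x) (β₂.symm m)))
        c.ω c.ϖ c.χ c.μ c.ρB c.ρM (fun x => ζ x) (fun v => η v)) :
    Inducible K E sA sV (fun x => α₁ x) (fun v => α₂ v)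
      (fun a => β₁ a) (fun m => β₂ m) := by
  obtain ⟨hI1, hI2, hI3, hI4, hI5, hI6⟩ := hcoc
  obtain ⟨hE1, hE2, hE3, hE4, hE5, hE6⟩ := heq
  beta_reduce at hE1 hE2 hE3 hE4 hE5 hE6
  obtain ⟨-, -, hαbr, hαT, hαrep⟩ := hα
  obtain ⟨-, -, hβbr, hβT, hβrep⟩ := hβ
  beta_reduce at hαbr hαT hαrep hβbr hβT hβrep
  -- star identities
  have star1 : ∀ x y, β₁ (c.ω x y)
      = (c.ρB (α₁ x) (ζ (α₁ y)) - c.ρB (α₁ y) (ζ (α₁ x)) - ζ (𝒜.br (α₁ x) (α₁ y))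
          + ℬ.br (ζ (α₁ x)) (ζ (α₁ y))) + c.ω (α₁ x) (α₁ y) := by
    intro x y
    have h := hE1 (α₁ x) (α₁ y)
    simp only [LinearEquiv.symm_apply_apply] at h
    exact eq_add_of_sub_eq h
  have star2 : ∀ x a, β₁ (c.ρB x a)
      = ℬ.br (ζ (α₁ x)) (β₁ a) + c.ρB (α₁ x) (β₁ a) := by
    intro x a
    have h := hE2 (α₁ x) (β₁ a)
    simp only [LinearEquiv.symm_apply_apply] at h
    exact eq_add_of_sub_eq h
  have star3 : ∀ x m, β₂ (c.ρM x m)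
      = ℬ.rep (ζ (α₁ x)) (β₂ m) + c.ρM (α₁ x) (β₂ m) := by
    intro x m
    have h := hE3 (α₁ x) (β₂ m)
    simp only [LinearEquiv.symm_apply_apply] at h
    exact eq_add_of_sub_eq h
  have star4 : ∀ v a, β₂ (c.μ v a)
      = -ℬ.rep (β₁ a) (η (α₂ v)) + c.μ (α₂ v) (β₁ a) := by
    intro v a
    have h := hE4 (α₂ v) (β₁ a)
    simp only [LinearEquiv.symm_apply_apply] at h
    exact eq_add_of_sub_eq h
  have star5 : ∀ v, β₁ (c.χ v)
      = (ℬ.T (η (α₂ v)) - ζ (𝒜.T (α₂ v))) + c.χ (α₂ v) := by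
    intro v
    have h := hE5 (α₂ v)
    simp only [LinearEquiv.symm_apply_apply] at h
    exact eq_add_of_sub_eq h
  have star6 : ∀ x v, β₂ (c.ϖ x v)
      = (c.ρM (α₁ x) (η (α₂ v)) + ℬ.rep (ζ (α₁ x)) (η (α₂ v))
          - c.μ (α₂ v) (ζ (α₁ x)) - η (𝒜.rep (α₁ x) (α₂ v))) + c.ϖ (α₁ x) (α₂ v) := by
    intro x v
    have h := hE6 (α₁ x) (α₂ v)
    simp only [LinearEquiv.symm_apply_apply] at h
    exact eq_add_of_sub_eq h
  -- retractions q, qV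
  have hrgq : ∀ e', ((LinearMap.id : Ah →ₗ[K] Ah) - sA ∘ₗ E.pA) e' ∈ Set.range E.iB := by
    intro e'
    rw [← E.exactA]
    simp [hsA]
  obtain ⟨q, hq0⟩ := lift_exists K E.iB E.iB_inj _ hrgq
  have hq : ∀ e', E.iB (q e') = e' - sA (E.pA e') := by
    intro e'
    have h := hq0 e'
    simpa using h
  have hrgqV : ∀ w, ((LinearMap.id : Vh →ₗ[K] Vh) - sV ∘ₗ E.pV) w ∈ Set.range E.iM := by
    intro w
    rw [← E.exactV]
    simp [hsV]
  obtain ⟨qV, hqV0⟩ := lift_exists K E.iM E.iM_inj _ hrgqV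
  have hqV : ∀ w, E.iM (qV w) = w - sV (E.pV w) := by
    intro w
    have h := hqV0 w
    simpa using h
  -- basic facts
  have hpAiB : ∀ b, E.pA (E.iB b) = 0 := fun b => (E.exactA _).mpr ⟨b, rfl⟩
  have hpViM : ∀ m, E.pV (E.iM m) = 0 := fun m => (E.exactV _).mpr ⟨m, rfl⟩
  have hqsA : ∀ x, q (sA x) = 0 := fun x => E.iB_inj (by rw [hq, hsA]; simp)
  have hqiB : ∀ b, q (E.iB b) = b := fun b => E.iB_inj (by rw [hq, hpAiB]; simp)
  have hqVsV : ∀ v, qV (sV v) = 0 := fun v => E.iM_inj (by rw [hqV, hsV]; simp)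
  have hqViM : ∀ m, qV (E.iM m) = m := fun m => E.iM_inj (by rw [hqV, hpViM]; simp)
  have hdec : ∀ e', sA (E.pA e') + E.iB (q e') = e' := fun e' => by rw [hq]; abel
  have hdecV : ∀ w, sV (E.pV w) + E.iM (qV w) = w := fun w => by rw [hqV]; abel
  -- the maps
  obtain ⟨f, hf⟩ : ∃ f : Ah →ₗ[K] Ah, ∀ e', f e' =
      sA (α₁ (E.pA e')) + E.iB (β₁ (q e') + ζ (α₁ (E.pA e'))) :=
    ⟨sA ∘ₗ α₁.toLinearMap ∘ₗ E.pA
      + E.iB ∘ₗ (β₁.toLinearMap ∘ₗ q + ζ ∘ₗ α₁.toLinearMap ∘ₗ E.pA),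
     fun e' => rfl⟩
  obtain ⟨g, hg⟩ : ∃ g : Ah →ₗ[K] Ah, ∀ e', g e' =
      sA (α₁.symm (E.pA e')) + E.iB (β₁.symm (q e' - ζ (E.pA e'))) :=
    ⟨sA ∘ₗ α₁.symm.toLinearMap ∘ₗ E.pA
      + E.iB ∘ₗ (β₁.symm.toLinearMap ∘ₗ (q - ζ ∘ₗ E.pA)),
     fun e' => rfl⟩
  obtain ⟨fV, hfV⟩ : ∃ fV : Vh →ₗ[K] Vh, ∀ w, fV w =
      sV (α₂ (E.pV w)) + E.iM (β₂ (qV w) + η (α₂ (E.pV w))) :=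
    ⟨sV ∘ₗ α₂.toLinearMap ∘ₗ E.pV
      + E.iM ∘ₗ (β₂.toLinearMap ∘ₗ qV + η ∘ₗ α₂.toLinearMap ∘ₗ E.pV),
     fun w => rfl⟩
  obtain ⟨gV, hgV⟩ : ∃ gV : Vh →ₗ[K] Vh, ∀ w, gV w =
      sV (α₂.symm (E.pV w)) + E.iM (β₂.symm (qV w - η (E.pV w))) :=
    ⟨sV ∘ₗ α₂.symm.toLinearMap ∘ₗ E.pV
      + E.iM ∘ₗ (β₂.symm.toLinearMap ∘ₗ (qV - η ∘ₗ E.pV)),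
     fun w => rfl⟩
  -- generator values
  have hfs : ∀ x, f (sA x) = sA (α₁ x) + E.iB (ζ (α₁ x)) := by
    intro x
    rw [hf, hsA, hqsA]
    simp
  have hfi : ∀ b, f (E.iB b) = E.iB (β₁ b) := by
    intro b
    rw [hf, hpAiB, hqiB]
    simp
  have hfVs : ∀ v, fV (sV v) = sV (α₂ v) + E.iM (η (α₂ v)) := by
    intro v
    rw [hfV, hsV, hqVsV]
    simp
  have hfVi : ∀ m, fV (E.iM m) = E.iM (β₂ m) := by
    intro m
    rw [hfV, hpViM, hqViM]
    simp
  -- inverse identities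
  have hfg : ∀ e', f (g e') = e' := by
    intro e'
    rw [hg, hf]
    simp only [map_add, hsA, hpAiB, hqsA, hqiB, add_zero, zero_add,
      LinearEquiv.apply_symm_apply, sub_add_cancel]
    exact hdec e'
  have hgf : ∀ e', g (f e') = e' := by
    intro e'
    rw [hf, hg]
    simp only [map_add, hsA, hpAiB, hqsA, hqiB, add_zero, zero_add,
      LinearEquiv.symm_apply_apply, add_sub_cancel_right]
    exact hdec e'
  have hfgV : ∀ w, fV (gV w) = w := by
    intro w
    rw [hgV, hfV]
    simp only [map_add, hsV, hpViM, hqVsV, hqViM, add_zero, zero_add,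
      LinearEquiv.apply_symm_apply, sub_add_cancel]
    exact hdecV w
  have hgfV : ∀ w, gV (fV w) = w := by
    intro w
    rw [hfV, hgV]
    simp only [map_add, hsV, hpViM, hqVsV, hqViM, add_zero, zero_add,
      LinearEquiv.symm_apply_apply, add_sub_cancel_right]
    exact hdecV w
  -- structure constants of the extension
  have hbrss : ∀ x y, ℰ.br (sA x) (sA y) = sA (𝒜.br x y) + E.iB (c.ω x y) := by
    intro x y; rw [hI1]; abel
  have hbrsi : ∀ x b, ℰ.br (sA x) (E.iB b) = E.iB (c.ρB x b) :=
    fun x b => (hI5 x b).symm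
  have hbris : ∀ b y, ℰ.br (E.iB b) (sA y) = -E.iB (c.ρB y b) := by
    intro b y
    rw [show ℰ.br (E.iB b) (sA y) = -ℰ.br (sA y) (E.iB b) from
      eq_neg_of_add_eq_zero_left (ℰ.skew _ _), hI5]
  have hbrii : ∀ a b, ℰ.br (E.iB a) (E.iB b) = E.iB (ℬ.br a b) :=
    fun a b => (E.iB_br a b).symm
  have hTs : ∀ v, ℰ.T (sV v) = sA (𝒜.T v) + E.iB (c.χ v) := by
    intro v; rw [hI3]; abel
  have hTi : ∀ m, ℰ.T (E.iM m) = E.iB (ℬ.T m) := fun m => (E.iB_T m).symm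
  have hrss : ∀ x v, ℰ.rep (sA x) (sV v) = sV (𝒜.rep x v) + E.iM (c.ϖ x v) := by
    intro x v; rw [hI2]; abel
  have hrsi : ∀ x m, ℰ.rep (sA x) (E.iM m) = E.iM (c.ρM x m) :=
    fun x m => (hI6 x m).symm
  have hris : ∀ a v, ℰ.rep (E.iB a) (sV v) = -E.iM (c.μ v a) := by
    intro a v; rw [hI4, neg_neg]
  have hrii : ∀ a m, ℰ.rep (E.iB a) (E.iM m) = E.iM (ℬ.rep a m) :=
    fun a m => (E.i_rep a m).symm
  -- key generator computations
  have keyBr : ∀ x a y b, f (ℰ.br (sA x + E.iB a) (sA y + E.iB b))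
      = ℰ.br (f (sA x + E.iB a)) (f (sA y + E.iB b)) := by
    intro x a y b
    simp only [map_add, LinearMap.add_apply, hbrss, hbrsi, hbris, hbrii,
      map_neg, hfs, hfi]
    rw [star1, star2 x b, star2 y a, hβbr, hαbr,
      show ℬ.br (ζ (α₁ y)) (β₁ a) = -ℬ.br (β₁ a) (ζ (α₁ y)) from
        eq_neg_of_add_eq_zero_left (ℬ.skew _ _)]
    simp only [map_add, map_sub, map_neg]
    abel
  have keyT : ∀ v m, f (ℰ.T (sV v + E.iM m)) = ℰ.T (fV (sV v + E.iM m)) := by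
    intro v m
    simp only [map_add, hTs, hTi, hfs, hfi, hfVs, hfVi]
    rw [hαT, star5, hβT]
    simp only [map_add, map_sub]
    abel
  have keyRep : ∀ x a v m, fV (ℰ.rep (sA x + E.iB a) (sV v + E.iM m))
      = ℰ.rep (f (sA x + E.iB a)) (fV (sV v + E.iM m)) := by
    intro x a v m
    simp only [map_add, LinearMap.add_apply, hrss, hrsi, hris, hrii,
      map_neg, hfs, hfi, hfVs, hfVi]
    rw [hαrep, star6, star3 x m, star4 v a, hβrep]
    simp only [map_add, map_sub, map_neg]
    abel
  refine ⟨LinearEquiv.ofLinear f g (LinearMap.ext hfg) (LinearMap.ext hgf),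
    LinearEquiv.ofLinear fV gV (LinearMap.ext hfgV) (LinearMap.ext hgfV),
    ?_, ?_, ?_, ?_, ?_, ?_, ?_⟩
  · intro u w
    simp only [LinearEquiv.ofLinear_apply]
    rw [← hdec u, ← hdec w]
    exact keyBr (E.pA u) (q u) (E.pA w) (q w)
  · intro w
    simp only [LinearEquiv.ofLinear_apply]
    rw [← hdecV w]
    exact keyT (E.pV w) (qV w)
  · intro u w
    simp only [LinearEquiv.ofLinear_apply]
    rw [← hdec u, ← hdecV w]
    exact keyRep (E.pA u) (q u) (E.pV w) (qV w)
  · intro a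
    simp only [LinearEquiv.ofLinear_apply]
    exact hfi a
  · intro m
    simp only [LinearEquiv.ofLinear_apply]
    exact hfVi m
  · intro x
    simp only [LinearEquiv.ofLinear_apply]
    rw [hfs, map_add, hsA, hpAiB, add_zero]
  · intro v
    simp only [LinearEquiv.ofLinear_apply]
    rw [hfVs, map_add, hsV, hpViM, add_zero]

/-- the Wells exact sequence for a non-abelian extension: a pair of
automorphisms `(α,β)` lies in the image of `K` iff its Wells class vanishes, i.e. the
twisted cocycle `Θ_{(α,β)}` and `Θ` have the same class in `ℋ²_nab(𝒜,ℬ)`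
(`Ker W = Im K`). -/
theorem wells_exactness_nonabelian {Ah Vh : Type u}
    [AddCommGroup Ah] [Module K Ah] [AddCommGroup Vh] [Module K Vh]
    (𝒜 : RelRB K A V) (ℬ : RelRB K B M) (ℰ : RelRB K Ah Vh)
    (E : ExtData K 𝒜 ℬ ℰ)
    (sA : A →ₗ[K] Ah) (sV : V →ₗ[K] Vh)
    (hsA : ∀ x, E.pA (sA x) = x) (hsV : ∀ v, E.pV (sV v) = v)
    (c : CocData A V B M)
    (hcoc : InducedCocycle K E sA sV c.ω c.ϖ c.χ c.μ c.ρB c.ρM)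
    (hc : IsNACocycle K 𝒜 ℬ c.ω c.ϖ c.χ c.μ c.ρB c.ρM)
    (α₁ : A ≃ₗ[K] A) (α₂ : V ≃ₗ[K] V)
    (hα : IsAutFun K 𝒜 (fun x => α₁ x) (fun v => α₂ v))
    (β₁ : B ≃ₗ[K] B) (β₂ : M ≃ₗ[K] M)
    (hβ : IsAutFun K ℬ (fun a => β₁ a) (fun m => β₂ m))
    (ctw : CocData A V B M)
    (hctw : ctw = ⟨fun x y => β₁ (c.ω (α₁.symm x) (α₁.symm y)),
      fun x v => β₂ (c.ϖ (α₁.symm x) (α₂.symm v)),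
      fun v => β₁ (c.χ (α₂.symm v)),
      fun v a => β₂ (c.μ (α₂.symm v) (β₁.symm a)),
      fun x a => β₁ (c.ρB (α₁.symm x) (β₁.symm a)),
      fun x m => β₂ (c.ρM (α₁.symm x) (β₂.symm m))⟩)
    (hctw' : IsNACocycle K 𝒜 ℬ ctw.ω ctw.ϖ ctw.χ ctw.μ ctw.ρB ctw.ρM) :
    Quot.mk (CocRel K 𝒜 ℬ) ⟨ctw, hctw'⟩ = Quot.mk (CocRel K 𝒜 ℬ) ⟨c, hc⟩ ↔
      Inducible K E sA sV (fun x => α₁ x) (fun v => α₂ v)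
        (fun a => β₁ a) (fun m => β₂ m) := by
  obtain ⟨hI1, hI2, hI3, hI4, hI5, hI6⟩ := hcoc
  have hcoc' : InducedCocycle K E sA sV c.ω c.ϖ c.χ c.μ c.ρB c.ρM :=
    ⟨hI1, hI2, hI3, hI4, hI5, hI6⟩
  subst hctw
  constructor
  · intro h
    -- additivity facts for c
    have hρBa : ∀ x u w, c.ρB x (u + w) = c.ρB x u + c.ρB x w := by
      intro x u w
      apply E.iB_inj
      simp only [hI5, map_add, LinearMap.add_apply]
    have hρBs : ∀ x u w, c.ρB x (u - w) = c.ρB x u - c.ρB x w := by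
      intro x u w
      apply E.iB_inj
      simp only [hI5, map_sub, LinearMap.sub_apply]
    have hρMa : ∀ x u w, c.ρM x (u + w) = c.ρM x u + c.ρM x w := by
      intro x u w
      apply E.iM_inj
      simp only [hI6, map_add, LinearMap.add_apply]
    have hρMs : ∀ x u w, c.ρM x (u - w) = c.ρM x u - c.ρM x w := by
      intro x u w
      apply E.iM_inj
      simp only [hI6, map_sub, LinearMap.sub_apply]
    have hμa : ∀ v u w, c.μ v (u + w) = c.μ v u + c.μ v w := by
      intro v u w
      apply E.iM_inj
      simp only [hI4, map_add, LinearMap.add_apply]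
      abel
    have hμs : ∀ v u w, c.μ v (u - w) = c.μ v u - c.μ v w := by
      intro v u w
      apply E.iM_inj
      simp only [hI4, map_sub, LinearMap.sub_apply]
      abel
    have hρB0 : ∀ x, c.ρB x 0 = 0 := fun x => E.iB_inj (by simp [hI5])
    have hρM0 : ∀ x, c.ρM x 0 = 0 := fun x => E.iM_inj (by simp [hI6])
    have hμ0 : ∀ v, c.μ v 0 = 0 := fun v => E.iM_inj (by simp [hI4])
    have hgen := Quot.eq.mp h
    have hstep := cocrel_step K 𝒜 ℬ ⟨c, hc⟩ hρBa hρBs hρMa hρMs hμa hμs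
    have hiter : ∀ d d', Relation.EqvGen (CocRel K 𝒜 ℬ) d d' →
        (CocRel K 𝒜 ℬ d ⟨c, hc⟩ ↔ CocRel K 𝒜 ℬ d' ⟨c, hc⟩) := by
      intro d d' hdd
      induction hdd with
      | rel u w huw => exact hstep u w huw
      | refl u => exact Iff.rfl
      | symm u w _ ih => exact ih.symm
      | trans u w z _ _ ih1 ih2 => exact ih1.trans ih2
    have hcc : CocRel K 𝒜 ℬ ⟨c, hc⟩ ⟨c, hc⟩ := by
      refine ⟨0, 0, ?_, ?_, ?_, ?_, ?_, ?_⟩ <;> intros <;>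
        simp [hρB0, hρM0, hμ0]
    obtain ⟨ζ, η, hequiv⟩ := (hiter _ _ hgen).mpr hcc
    exact construct K 𝒜 ℬ ℰ E sA sV hsA hsV c hcoc' α₁ α₂ hα β₁ β₂ hβ ζ η hequiv
  · intro h
    obtain ⟨ζ, η, hequiv⟩ :=
      invert K 𝒜 ℬ ℰ E sA sV hsA hsV c hcoc' α₁ α₂ hα β₁ β₂ h
    exact Quot.sound ⟨ζ, η, hequiv⟩


end
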